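/- arXiv:2003.08424 — 2 statements merged into one kernel-verified Lean document; each statement's English description precedes it below -/
import Mathlib

section
/- Let g be a Lorentzian-signature symmetric bilinear form on a 4-dimensional real vector space, V a g-null vector, α > 0 and β real. Then ĝ = α g + β (g(V,·) ⊗ g(V,·)) is nondegenerate and has Lorentzian signature (one negative, three positive eigenvalues). -/
open Matrix

private lemma mulMat_vecMulVec {M : Matrix (Fin 4) (Fin 4) ℝ} {a b : Fin 4 → ℝ} :
    M * vecMulVec a b = vecMulVec (M *ᵥ a) b := by
  ext i j
  simp [Matrix.mul_apply, vecMulVec_apply, Matrix.mulVec, dotProduct, Finset.sum_mul, mul_assoc]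

private lemma vecMulVec_mulMat {M : Matrix (Fin 4) (Fin 4) ℝ} {a b : Fin 4 → ℝ} :
    vecMulVec a b * M = vecMulVec a (Mᵀ *ᵥ b) := by
  ext i j
  simp [Matrix.mul_apply, vecMulVec_apply, Matrix.mulVec, dotProduct, Finset.mul_sum,
    Matrix.transpose_apply]
  congr 1; funext k; ring

private lemma vecMulVec_transp {a b : Fin 4 → ℝ} : (vecMulVec a b)ᵀ = vecMulVec b a := by
  ext i j; simp [vecMulVec_apply, mul_comm]

private lemma vecMulVec_mul_vecMulVec' {a b c d : Fin 4 → ℝ} :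
    vecMulVec a b * vecMulVec c d = (b ⬝ᵥ c) • vecMulVec a d := by
  ext i j
  simp [Matrix.mul_apply, vecMulVec_apply, dotProduct, Finset.sum_mul, Finset.mul_sum]
  congr 1; funext k; ring

private lemma mulVec_dot {M : Matrix (Fin 4) (Fin 4) ℝ} {a b : Fin 4 → ℝ} :
    (M *ᵥ a) ⬝ᵥ b = a ⬝ᵥ (Mᵀ *ᵥ b) := by
  simp [dotProduct, Matrix.mulVec, Finset.sum_mul, Finset.mul_sum, Matrix.transpose_apply]
  rw [Finset.sum_comm]
  congr 1; funext k; congr 1; funext l; ring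

/-- The light-like disformal metric ĝ = α g + β V♭ ⊗ V♭ on ℝ⁴, with α > 0,
β arbitrary and V g-null, has Lorentzian signature (−,+,+,+) whenever g does:
congruence to diag(−1,1,1,1) is preserved. -/
theorem disformal_lorentzian_signature
    (g : Matrix (Fin 4) (Fin 4) ℝ)
    (hsymm : g.transpose = g)
    (hη : ∃ Q : Matrix (Fin 4) (Fin 4) ℝ, IsUnit Q.det ∧
      Q.transpose * g * Q = Matrix.diagonal ![-1, 1, 1, 1])
    (V : Fin 4 → ℝ)
    (hnull : dotProduct (g.mulVec V) V = 0)
    (α β : ℝ) (hα : 0 < α) :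
    ∃ P : Matrix (Fin 4) (Fin 4) ℝ, IsUnit P.det ∧
      P.transpose * (α • g + β • vecMulVec (g.mulVec V) (g.mulVec V)) * P =
        Matrix.diagonal ![-1, 1, 1, 1] := by
  obtain ⟨Q, hQdet, hQη⟩ := hη
  set η : Matrix (Fin 4) (Fin 4) ℝ := Matrix.diagonal ![-1, 1, 1, 1] with hηdef
  have hηη : η * η = 1 := by
    rw [hηdef, Matrix.diagonal_mul_diagonal]
    ext i j
    fin_cases i <;> fin_cases j <;> simp [Matrix.one_apply]
  have hηT : ηᵀ = η := Matrix.diagonal_transpose _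
  haveI : Invertible Q := Q.invertibleOfIsUnitDet hQdet
  -- inverse of g
  have hK : Q * η * Qᵀ * g = 1 := by
    have h := congrArg (fun M => ⅟(Qᵀ) * M * ⅟Q) hQη
    simp only [mul_assoc, invOf_mul_cancel_left, mul_invOf_self, mul_one] at h
    rw [h]
    simp only [mul_assoc, mul_invOf_cancel_left, ← mul_assoc η η, hηη]
    simp
  set w : Fin 4 → ℝ := g *ᵥ V with hwdef
  set u : Fin 4 → ℝ := Qᵀ *ᵥ w with hudef
  -- u is η-null
  have hc : u ⬝ᵥ (η *ᵥ u) = 0 := by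
    have : u ⬝ᵥ (η *ᵥ u) = w ⬝ᵥ ((Q * η * Qᵀ * g) *ᵥ V) := by
      rw [hudef, mulVec_dot, transpose_transpose, hwdef]
      simp only [Matrix.mulVec_mulVec, Matrix.mul_assoc]
    rw [this, hK, Matrix.one_mulVec]
    exact hnull
  have hc' : (η *ᵥ u) ⬝ᵥ u = 0 := by rw [dotProduct_comm]; exact hc
  have hηu : η *ᵥ (η *ᵥ u) = u := by rw [Matrix.mulVec_mulVec, hηη, Matrix.one_mulVec]
  set N : Matrix (Fin 4) (Fin 4) ℝ := vecMulVec (η *ᵥ u) u with hNdef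
  set U : Matrix (Fin 4) (Fin 4) ℝ := vecMulVec u u with hUdef
  have hNT : Nᵀ = vecMulVec u (η *ᵥ u) := vecMulVec_transp
  have hηN : η * N = U := by rw [hNdef, mulMat_vecMulVec, hηu]
  have hNTη : Nᵀ * η = U := by rw [hNT, vecMulVec_mulMat, hηT, hηu]
  have hUN : U * N = 0 := by
    rw [hUdef, hNdef, vecMulVec_mul_vecMulVec', hc, zero_smul]
  have hNTU : Nᵀ * U = 0 := by
    rw [hNT, hUdef, vecMulVec_mul_vecMulVec', hc', zero_smul]
  have hNN : N * N = 0 := by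
    rw [hNdef, vecMulVec_mul_vecMulVec', hc, zero_smul]
  set t : ℝ := -(β / (2 * α)) with htdef
  have ht : β + t * α + t * α = 0 := by
    rw [htdef]; field_simp; ring
  set s : ℝ := (Real.sqrt α)⁻¹ with hsdef
  have hs : s * s * α = 1 := by
    rw [hsdef, ← mul_inv, Real.mul_self_sqrt hα.le]
    exact inv_mul_cancel₀ hα.ne'
  set R : Matrix (Fin 4) (Fin 4) ℝ := s • (1 + t • N) with hRdef
  refine ⟨Q * R, ?_, ?_⟩
  · -- invertibility
    rw [Matrix.det_mul]
    refine hQdet.mul ?_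
    refine IsUnit.of_mul_eq_one ((s⁻¹ • (1 - t • N)).det) ?_
    rw [← Matrix.det_mul]
    have : R * (s⁻¹ • (1 - t • N)) = 1 := by
      rw [hRdef, Matrix.smul_mul, Matrix.mul_smul, smul_smul]
      have hs0 : s ≠ 0 := inv_ne_zero (ne_of_gt (Real.sqrt_pos.2 hα))
      rw [mul_inv_cancel₀ hs0, one_smul]
      rw [Matrix.mul_sub, Matrix.mul_one, Matrix.mul_smul, Matrix.add_mul,
        Matrix.one_mul, Matrix.smul_mul, hNN, smul_zero]
      simp
    rw [this, Matrix.det_one]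
  · -- the congruence
    have hstep2 : Qᵀ * (α • g + β • vecMulVec w w) * Q = α • η + β • U := by
      rw [Matrix.mul_add, Matrix.add_mul, Matrix.mul_smul, Matrix.smul_mul,
        Matrix.mul_smul, Matrix.smul_mul, hQη, mulMat_vecMulVec, vecMulVec_mulMat,
        ← hudef, hUdef, hudef]
    have hinner : (α • η + β • U) * (1 + t • N) = α • η + (β + t * α) • U := by
      rw [Matrix.mul_add, Matrix.mul_one, Matrix.mul_smul, Matrix.add_mul,
        Matrix.smul_mul, Matrix.smul_mul, hηN, hUN]
      simp only [smul_zero, add_zero, smul_smul]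
      module
    have houter : (1 + t • Nᵀ) * (α • η + (β + t * α) • U) = α • η := by
      rw [Matrix.add_mul, Matrix.one_mul, Matrix.smul_mul, Matrix.mul_add,
        Matrix.mul_smul, Matrix.mul_smul, hNTη, hNTU]
      simp only [smul_zero, add_zero, smul_smul]
      rw [add_assoc, ← add_smul, show β + t * α + t * α = 0 from ht, zero_smul, add_zero]
    have hRT : Rᵀ = s • (1 + t • Nᵀ) := by
      rw [hRdef, Matrix.transpose_smul, Matrix.transpose_add, Matrix.transpose_one,
        Matrix.transpose_smul]
    calc (Q * R)ᵀ * (α • g + β • vecMulVec w w) * (Q * R)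
        = Rᵀ * (Qᵀ * (α • g + β • vecMulVec w w) * Q) * R := by
          rw [Matrix.transpose_mul]
          simp only [Matrix.mul_assoc]
      _ = (s • (1 + t • Nᵀ)) * (α • η + β • U) * (s • (1 + t • N)) := by
          rw [hstep2, hRT, hRdef]
      _ = (s * s) • ((1 + t • Nᵀ) * ((α • η + β • U) * (1 + t • N))) := by
          rw [Matrix.smul_mul, Matrix.smul_mul, Matrix.mul_smul, smul_smul, Matrix.mul_assoc]
      _ = η := by
          rw [hinner, houter, smul_smul, hs, one_smul]
end

section
/- For the disformal Minkowski metric ĝ obtained from dŝ² = (−1+f(r)²)dv² + 2 dv dr + r²dΩ² (disformal vector d_μ = f(r)δ_μ^v, d^μ = −f(r) in the r-slot after raising with η), the disformal Senovilla scalar satisfies ξ̂ = ξ + (d^r U_{,r})² = −4(1 − f(r)²)/r². Consequently ξ̂ ≥ 0 if and only if f(r)² ≥ 1. -/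
open Matrix

/-- The disformal Senovilla scalar for the disformal Minkowski metric with
disformal vector of raised 2D components d^a = (0, −f): with
ĝ^{ab} = η^{ab} − d^a d^b and H = (0, 2/r), one gets
ξ̂ = −ĝ^{ab}H_aH_b = −4(1 − f²)/r², which is nonnegative iff f² ≥ 1. -/
theorem disformal_senovilla_scalar (r f : ℝ) (hr : 0 < r)
    (ηinv : Matrix (Fin 2) (Fin 2) ℝ) (hη : ηinv = !![0, 1; 1, 1])
    (dup : Fin 2 → ℝ) (hd : dup = ![0, -f])
    (H : Fin 2 → ℝ) (hH : H = ![0, 2 / r]) :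
    -dotProduct H ((ηinv - vecMulVec dup dup).mulVec H) =
      -4 * (1 - f ^ 2) / r ^ 2 ∧
    (0 ≤ -4 * (1 - f ^ 2) / r ^ 2 ↔ 1 ≤ f ^ 2) := by
  have hr0 : (r:ℝ) ≠ 0 := ne_of_gt hr
  constructor
  · subst hη hd hH
    simp [dotProduct, mulVec, vecMulVec, Fin.sum_univ_two, Matrix.sub_apply]
    field_simp
    ring
  · have h2 : 0 < r ^ 2 := by positivity
    rw [div_nonneg_iff]
    constructor
    · rintro (⟨h1, _⟩ | ⟨h1, h2'⟩)
      · nlinarith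
      · nlinarith
    · intro h1
      left
      constructor <;> nlinarith
end
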